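/- If a fragment F of a cactus graph is split into s edge-disjoint connected subparts such that the two topmost edges of each cycle lie in the same subpart, then at most 2s − 2 vertices of F belong to more than one subpart. -/

import Mathlib

/-!
Two parts `A`, `B` share at most two vertices. An `A`-path and a `B`-path between two shared
vertices close up a cycle whose edges switch between `A` and `B` at exactly two vertices, and every
shared vertex is a switching vertex of such a cycle. Two such cycles cannot be edge-disjoint: the
topmost edges of one of them lie in a single part, so the other part, being connected, is trapped
behind that cycle as seen from the root, and with it the second cycle; each cycle would then lie
strictly farther from the root than the other. In a cactus they therefore have the same edges, so
all shared vertices are switching vertices of a single cycle. The bound `2s - 2` follows by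
repeatedly merging two parts that share a vertex.
-/

def IsCactus {V : Type*} (G : SimpleGraph V) : Prop :=
  G.Connected ∧
    ∀ {u v : V} (c : G.Walk u u) (d : G.Walk v v), c.IsCycle → d.IsCycle →
      ∀ e, e ∈ c.edges → e ∈ d.edges → ∀ f, (f ∈ c.edges ↔ f ∈ d.edges)

open SimpleGraph Finset

namespace SimpleGraph.Walk

variable {V : Type*} {G : SimpleGraph V}

lemma exists_eq_append_first_mem (S : Set V) {a b : V} (p : G.Walk a b) (hb : b ∈ S) :
    ∃ y ∈ S, ∃ (p₁ : G.Walk a y) (p₂ : G.Walk y b),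
      p = p₁.append p₂ ∧ ∀ z ∈ p₁.support, z ∈ S → z = y := by
  induction p with
  | nil => exact ⟨_, hb, nil, nil, rfl, by simp⟩
  | @cons a a' b h p' ih =>
    by_cases ha : a ∈ S
    · exact ⟨a, ha, nil, cons h p', rfl, by simp⟩
    obtain ⟨y, hy, p₁, p₂, rfl, hfirst⟩ := ih hb
    refine ⟨y, hy, cons h p₁, p₂, rfl, ?_⟩
    intro z hz hzS
    rw [support_cons, List.mem_cons] at hz
    rcases hz with rfl | hz
    · exact absurd hzS ha
    · exact hfirst z hz hzS

lemma exists_mem_edges_start_mem {u v : V} (p : G.Walk u v) (huv : u ≠ v) :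
    ∃ e ∈ p.edges, u ∈ e :=
  (mem_support_iff_exists_mem_edges_of_not_nil (not_nil_of_ne huv)).mp p.start_mem_support

lemma edges_disjoint_of_forall_mem_support_eq {a b u v y : V} {p : G.Walk a b}
    {q : G.Walk u v} (h : ∀ z ∈ p.support, z ∈ q.support → z = y) :
    p.edges.Disjoint q.edges := by
  intro e hp hq
  induction e using Sym2.ind with
  | _ s t =>
    have hs := h s (p.fst_mem_support_of_mem_edges hp) (q.fst_mem_support_of_mem_edges hq)
    have ht := h t (p.snd_mem_support_of_mem_edges hp) (q.snd_mem_support_of_mem_edges hq)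
    exact (p.adj_of_mem_edges hp).ne (hs.trans ht.symm)

lemma IsPath.start_notMem_support_tail {u v : V} {p : G.Walk u v} (hp : p.IsPath) :
    u ∉ p.support.tail := by
  have := hp.support_nodup
  rw [← cons_tail_support, List.nodup_cons] at this
  exact this.1

lemma IsCycle.eq_or_eq_of_mem_support {x y v : V} {p q : G.Walk x y}
    (hc : (p.append q.reverse).IsCycle) (hp : v ∈ p.support) (hq : v ∈ q.support) :
    v = x ∨ v = y := by
  by_contra! hv
  have hp' : v ∈ p.support.tail := by
    rw [← cons_tail_support, List.mem_cons] at hp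
    exact hp.resolve_left hv.1
  have hq' : v ∈ q.reverse.support.tail := by
    have hq : v ∈ q.reverse.support := by simpa using hq
    rw [← cons_tail_support, List.mem_cons] at hq
    exact hq.resolve_left hv.2
  have := hc.support_nodup
  rw [tail_support_append, List.nodup_append] at this
  exact this.2.2 v hp' v hq' rfl

lemma IsPath.exists_isCycle_append_reverse [DecidableEq V] {x z : V} {p q : G.Walk x z}
    (hp : p.IsPath) (hq : q.IsPath) (hxz : x ≠ z) (hpq : p.edges.Disjoint q.edges) :
    ∃ y ≠ x, ∃ p₁ q₁ : G.Walk x y,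
      p₁.edges ⊆ p.edges ∧ q₁.edges ⊆ q.edges ∧ (p₁.append q₁.reverse).IsCycle := by
  cases p with
  | nil => exact absurd rfl hxz
  | @cons _ x' _ h p' =>
  obtain ⟨y, hyq, p₁, p₂, rfl, hfirst⟩ :=
    exists_eq_append_first_mem {v | v ∈ q.support} p' q.end_mem_support
  have hp₁ : (cons h p₁).IsPath := by
    rw [← cons_append] at hp
    exact hp.of_append_left
  have hyx : y ≠ x := by
    rintro rfl
    exact hp₁.start_notMem_support_tail (by simp)
  have hq₁ := (hq.takeUntil hyq).reverse
  refine ⟨y, hyx, cons h p₁, q.takeUntil y hyq, ?_, q.edges_takeUntil_subset_edges hyq,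
    hp₁.isCycle_append hq₁ ?_ ?_⟩
  · intro e he
    rw [edges_cons, List.mem_cons] at he
    rw [edges_cons, List.mem_cons, edges_append, List.mem_append]
    tauto
  · intro v hv₁ hv₂
    have hvq : v ∈ q.support := q.support_takeUntil_subset_support hyq
      (by simpa using List.mem_of_mem_tail hv₂)
    rw [support_cons, List.tail_cons] at hv₁
    exact hq₁.start_notMem_support_tail (hfirst v hv₁ hvq ▸ hv₂)
  · by_contra! hlen
    have heq : cons h p₁ = q.takeUntil y hyq :=
      eq_of_length_le_one hlen.1 (by simpa using hlen.2)
    have hx : s(x, x') ∈ (cons h p₁).edges := by simp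
    rw [heq] at hx
    exact hpq (by simp) (q.edges_takeUntil_subset_edges hyq hx)

def IsEntryFrom {u : V} (c : G.Walk u u) (r v : V) : Prop :=
  v ∈ c.support ∧ ∃ ρ : G.Walk r v, ∀ z ∈ ρ.support, z ∈ c.support → z = v

lemma exists_isEntryFrom (hG : G.Connected) {u : V} (c : G.Walk u u) (r : V) :
    ∃ v, c.IsEntryFrom r v := by
  obtain ⟨v, hv, ρ, -, -, hfirst⟩ :=
    exists_eq_append_first_mem {z | z ∈ c.support} (hG r u).some c.start_mem_support
  exact ⟨v, hv, ρ, hfirst⟩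

def IsBehind {u : V} (c : G.Walk u u) (r v z : V) : Prop :=
  ∀ w : G.Walk z r, ∃ x ∈ w.support, x ∈ c.support ∧ x ≠ v

end SimpleGraph.Walk

namespace SimpleGraph

open Walk

variable {V : Type*} {G : SimpleGraph V} {r : V} {A B : Set (Sym2 V)}

def incidentVerts (A : Set (Sym2 V)) : Set V := {v | ∃ e ∈ A, v ∈ e}

structure IsPart (G : SimpleGraph V) (r : V) (A : Set (Sym2 V)) : Prop where
  connected : ∀ a b : V, a ∈ incidentVerts A → b ∈ incidentVerts A →
    ∃ w : G.Walk a b, ∀ e ∈ w.edges, e ∈ A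
  topClosed : ∀ {u : V} (c : G.Walk u u), c.IsCycle →
    ∀ v ∈ c.support, (∀ w ∈ c.support, G.dist r v ≤ G.dist r w) →
      ∀ e f, e ∈ c.edges → f ∈ c.edges → v ∈ e → v ∈ f → e ∈ A → f ∈ A

lemma IsPart.union (hA : IsPart G r A) (hB : IsPart G r B) {v : V}
    (hvA : v ∈ incidentVerts A) (hvB : v ∈ incidentVerts B) : IsPart G r (A ∪ B) where
  connected := by
    have toV : ∀ a ∈ incidentVerts (A ∪ B), ∃ w : G.Walk a v, ∀ e ∈ w.edges, e ∈ A ∪ B := by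
      rintro a ⟨e, he | he, hae⟩
      · obtain ⟨w, hw⟩ := hA.connected a v ⟨e, he, hae⟩ hvA
        exact ⟨w, fun f hf => Or.inl (hw f hf)⟩
      · obtain ⟨w, hw⟩ := hB.connected a v ⟨e, he, hae⟩ hvB
        exact ⟨w, fun f hf => Or.inr (hw f hf)⟩
    intro a b ha hb
    obtain ⟨wa, hwa⟩ := toV a ha
    obtain ⟨wb, hwb⟩ := toV b hb
    refine ⟨wa.append wb.reverse, fun e he => ?_⟩
    rw [edges_append, List.mem_append, edges_reverse, List.mem_reverse] at he
    exact he.elim (hwa e) (hwb e)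
  topClosed c hc v hv hmin e f he hf hve hvf :=
    Or.imp (hA.topClosed c hc v hv hmin e f he hf hve hvf)
      (hB.topClosed c hc v hv hmin e f he hf hve hvf)

def IsMixed (A B : Set (Sym2 V)) {u : V} (c : G.Walk u u) : Prop :=
  (∀ e ∈ c.edges, e ∈ A ∨ e ∈ B) ∧ (∃ e ∈ c.edges, e ∈ A) ∧ ∃ e ∈ c.edges, e ∈ B

lemma isMixed_append_reverse {x y : V} (hyx : y ≠ x) {p q : G.Walk x y}
    (hp : ∀ e ∈ p.edges, e ∈ A) (hq : ∀ e ∈ q.edges, e ∈ B) :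
    IsMixed A B (p.append q.reverse) := by
  obtain ⟨e, he, -⟩ := p.exists_mem_edges_start_mem hyx.symm
  obtain ⟨f, hf, -⟩ := q.exists_mem_edges_start_mem hyx.symm
  refine ⟨fun g hg => ?_, ⟨e, by simp [edges_append, he], hp e he⟩,
    ⟨f, by simp [edges_append, hf], hq f hf⟩⟩
  rw [edges_append, List.mem_append, edges_reverse, List.mem_reverse] at hg
  exact hg.imp (hp g) (hq g)

lemma exists_isCycle_of_mem_incidentVerts (hA : IsPart G r A) (hB : IsPart G r B)
    (hAB : Disjoint A B) {x z : V} (hx : x ∈ incidentVerts A ∩ incidentVerts B)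
    (hz : z ∈ incidentVerts A ∩ incidentVerts B) (hxz : x ≠ z) :
    ∃ y ≠ x, ∃ p q : G.Walk x y, (∀ e ∈ p.edges, e ∈ A) ∧ (∀ e ∈ q.edges, e ∈ B) ∧
      (p.append q.reverse).IsCycle := by
  classical
  obtain ⟨p, hp⟩ := hA.connected x z hx.1 hz.1
  obtain ⟨q, hq⟩ := hB.connected x z hx.2 hz.2
  obtain ⟨y, hyx, p₁, q₁, hp₁, hq₁, hcyc⟩ :=
    p.bypass_isPath.exists_isCycle_append_reverse q.bypass_isPath hxz fun e hep heq =>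
      Set.disjoint_left.mp hAB (hp e (p.edges_bypass_subset_edges hep))
        (hq e (q.edges_bypass_subset_edges heq))
  exact ⟨y, hyx, p₁, q₁, fun e he => hp e (p.edges_bypass_subset_edges (hp₁ he)),
    fun e he => hq e (q.edges_bypass_subset_edges (hq₁ he)), hcyc⟩

lemma Walk.IsCycle.eq_or_eq_of_mem_both (hAB : Disjoint A B) {x y v : V} {p q : G.Walk x y}
    (hc : (p.append q.reverse).IsCycle) (hp : ∀ e ∈ p.edges, e ∈ A) (hq : ∀ e ∈ q.edges, e ∈ B)
    (hvA : ∃ e ∈ (p.append q.reverse).edges, e ∈ A ∧ v ∈ e)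
    (hvB : ∃ e ∈ (p.append q.reverse).edges, e ∈ B ∧ v ∈ e) : v = x ∨ v = y := by
  obtain ⟨e, he, heA, hve⟩ := hvA
  obtain ⟨f, hf, hfB, hvf⟩ := hvB
  rw [edges_append, List.mem_append, edges_reverse, List.mem_reverse] at he hf
  have he : e ∈ p.edges := he.resolve_right fun he => Set.disjoint_left.mp hAB heA (hq e he)
  have hf : f ∈ q.edges := hf.resolve_left fun hf => Set.disjoint_left.mp hAB (hp f hf) hfB
  exact hc.eq_or_eq_of_mem_support (mem_support_iff_exists_mem_edges.mpr (.inr ⟨e, he, hve⟩))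
    (mem_support_iff_exists_mem_edges.mpr (.inr ⟨f, hf, hvf⟩))

def sharedVerts (𝒜 : Finset (Set (Sym2 V))) : Set V :=
  {v | ∃ A ∈ 𝒜, ∃ B ∈ 𝒜, A ≠ B ∧ v ∈ incidentVerts A ∧ v ∈ incidentVerts B}

lemma sharedVerts_subset_merge [DecidableEq (Set (Sym2 V))] {𝒜 : Finset (Set (Sym2 V))}
    (hdisj : (𝒜 : Set (Set (Sym2 V))).PairwiseDisjoint id) :
    sharedVerts 𝒜 ⊆
      sharedVerts (insert (A ∪ B) ((𝒜.erase A).erase B)) ∪ (incidentVerts A ∩ incidentVerts B) := by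
  have hmem : ∀ C ∈ 𝒜, ¬(C = A ∨ C = B) → C ∈ insert (A ∪ B) ((𝒜.erase A).erase B) := by
    intro C hC hCAB
    obtain ⟨hCA, hCB⟩ := not_or.mp hCAB
    exact mem_insert_of_mem (mem_erase.2 ⟨hCB, mem_erase.2 ⟨hCA, hC⟩⟩)
  have hmerged : ∀ x, ∀ C ∈ 𝒜, ∀ D ∈ 𝒜, C ≠ D → x ∈ incidentVerts C → x ∈ incidentVerts D →
      (C = A ∨ C = B) → ¬(D = A ∨ D = B) →
      x ∈ sharedVerts (insert (A ∪ B) ((𝒜.erase A).erase B)) := by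
    rintro x C hC D hD hCD ⟨e, heC, hxe⟩ hxD hCAB hDAB
    have hCsub : C ⊆ A ∪ B := by
      rcases hCAB with rfl | rfl
      exacts [Set.subset_union_left, Set.subset_union_right]
    refine ⟨A ∪ B, mem_insert_self _ _, D, hmem D hD hDAB, ?_, ⟨e, hCsub heC, hxe⟩, hxD⟩
    rintro rfl
    exact Set.disjoint_left.mp (hdisj hC hD hCD) heC (hCsub heC)
  rintro x ⟨C, hC, D, hD, hCD, hxC, hxD⟩
  by_cases hCAB : C = A ∨ C = B <;> by_cases hDAB : D = A ∨ D = B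
  · right
    rcases hCAB with rfl | rfl <;> rcases hDAB with rfl | rfl
    exacts [absurd rfl hCD, ⟨hxC, hxD⟩, ⟨hxD, hxC⟩, absurd rfl hCD]
  · exact .inl (hmerged x C hC D hD hCD hxC hxD hCAB hDAB)
  · obtain ⟨E, hE, F, hF, hEF, hxE, hxF⟩ := hmerged x D hD C hC hCD.symm hxD hxC hDAB hCAB
    exact .inl ⟨F, hF, E, hE, hEF.symm, hxF, hxE⟩
  · exact .inl ⟨C, hmem C hC hCAB, D, hmem D hD hDAB, hCD, hxC, hxD⟩

end SimpleGraph

namespace IsCactus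

open Walk

variable {V : Type*} {G : SimpleGraph V} {u r v : V} {c : G.Walk u u} {A B : Set (Sym2 V)}

/-- Otherwise the walk, closed up by an arc of the cycle, contains a second cycle sharing an edge
with `c` but not all of its edges. -/
theorem eq_of_walk_outside_cycle (hG : IsCactus G) (hc : c.IsCycle) {a b : V}
    (ha : a ∈ c.support) (hb : b ∈ c.support) (w : G.Walk a b)
    (hsupp : ∀ z ∈ w.support, z ∈ c.support → z = a ∨ z = b)
    (hedges : w.edges.Disjoint c.edges) : a = b := by
  classical
  by_contra hab
  have hp : w.bypass.IsPath := w.bypass_isPath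
  have hp_edges : ∀ e ∈ w.bypass.edges, e ∉ c.edges :=
    fun e he => hedges (w.edges_bypass_subset_edges he)
  have hb' : b ∈ (c.rotate a ha).support := (c.mem_support_rotate_iff a ha).mpr hb
  set arc := (c.rotate a ha).takeUntil b hb'
  have harc : arc.IsPath := (hc.rotate ha).isPath_takeUntil hb'
  have harc_edges : ∀ e ∈ arc.edges, e ∈ c.edges := fun e he =>
    (c.rotate_edges a ha).mem_iff.mp ((c.rotate a ha).edges_takeUntil_subset_edges hb' he)
  have hD : (arc.append w.bypass.reverse).IsCycle := by
    refine harc.isCycle_append hp.reverse ?_ ?_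
    · intro x hx₁ hx₂
      have hxc : x ∈ c.support := (c.mem_support_rotate_iff a ha).mp
        ((c.rotate a ha).support_takeUntil_subset_support hb' (List.mem_of_mem_tail hx₁))
      have hxw : x ∈ w.support :=
        w.support_bypass_subset_support (by simpa using List.mem_of_mem_tail hx₂)
      rcases hsupp x hxw hxc with rfl | rfl
      · exact harc.start_notMem_support_tail hx₁
      · exact hp.reverse.start_notMem_support_tail hx₂
    · by_contra! hlen
      have heq : arc = w.bypass := eq_of_length_le_one hlen.1 (by simpa using hlen.2)
      obtain ⟨e, he, -⟩ := arc.exists_mem_edges_start_mem hab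
      exact hp_edges e (heq ▸ he) (harc_edges e he)
  obtain ⟨e, he, -⟩ := arc.exists_mem_edges_start_mem hab
  obtain ⟨f, hf, -⟩ := w.bypass.exists_mem_edges_start_mem hab
  have hsame := hG.2 _ c hD hc e (by simp [edges_append, he]) (harc_edges e he)
  exact hp_edges f hf ((hsame f).mp (by simp [edges_append, hf]))

theorem isEntryFrom_unique (hG : IsCactus G) (hc : c.IsCycle) {y₁ y₂ : V}
    (h₁ : c.IsEntryFrom r y₁) (h₂ : c.IsEntryFrom r y₂) : y₁ = y₂ := by
  obtain ⟨hy₁, ρ₁, hρ₁⟩ := h₁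
  obtain ⟨hy₂, ρ₂, hρ₂⟩ := h₂
  refine hG.eq_of_walk_outside_cycle hc hy₁ hy₂ (ρ₁.reverse.append ρ₂) ?_ ?_
  · intro z hz hzc
    rw [mem_support_append_iff, support_reverse, List.mem_reverse] at hz
    exact hz.imp (hρ₁ z · hzc) (hρ₂ z · hzc)
  · rw [edges_append, edges_reverse, List.disjoint_append_left, List.disjoint_reverse_left]
    exact ⟨edges_disjoint_of_forall_mem_support_eq hρ₁,
      edges_disjoint_of_forall_mem_support_eq hρ₂⟩

theorem dist_lt_of_isEntryFrom (hG : IsCactus G) (hc : c.IsCycle) (hv : c.IsEntryFrom r v)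
    {x : V} (hx : x ∈ c.support) (hxv : x ≠ v) : G.dist r v < G.dist r x := by
  obtain ⟨σ, hσ⟩ := hG.1.exists_walk_length_eq_dist r x
  obtain ⟨y, hy, σ₁, σ₂, rfl, hfirst⟩ := exists_eq_append_first_mem {z | z ∈ c.support} σ hx
  obtain rfl : y = v := hG.isEntryFrom_unique hc ⟨hy, σ₁, hfirst⟩ hv
  have h₁ := dist_le σ₁
  have h₂ : 0 < σ₂.length := not_nil_iff_lt_length.mp (not_nil_of_ne (Ne.symm hxv))
  rw [length_append] at hσ
  omega

theorem isBehind_of_adj (hG : IsCactus G) (hc : c.IsCycle) (hv : c.IsEntryFrom r v)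
    {z z' : V} (hz : c.IsBehind r v z) (h : G.Adj z z')
    (he : v ∈ s(z, z') → s(z, z') ∉ c.edges) : c.IsBehind r v z' := by
  classical
  intro w
  by_contra! hw
  obtain ⟨x, hx, hxc, hxv⟩ := hz (cons h w)
  rw [support_cons, List.mem_cons] at hx
  obtain rfl : x = z := hx.resolve_right fun hx => hxv (hw x hx hxc)
  have hzz' : s(x, z') ∉ c.edges := by
    by_cases hz'c : z' ∈ c.support
    · exact he (hw z' w.start_mem_support hz'c ▸ Sym2.mem_mk_right x z')
    · exact fun hc' => hz'c (c.snd_mem_support_of_mem_edges hc')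
  by_cases hvw : v ∈ w.support
  · refine hxv (hG.eq_of_walk_outside_cycle hc hxc hv.1 (cons h (w.takeUntil v hvw)) ?_ ?_)
    · intro y hy hyc
      rw [support_cons, List.mem_cons] at hy
      exact hy.imp id fun hy => hw y (w.support_takeUntil_subset_support hvw hy) hyc
    · rw [edges_cons, List.disjoint_cons_left]
      exact ⟨hzz', fun e he =>
        edges_disjoint_of_forall_mem_support_eq hw (w.edges_takeUntil_subset_edges hvw he)⟩
  · -- `w` avoids `c` altogether, so `x` would be a second entry vertex
    refine hxv (hG.isEntryFrom_unique hc ⟨hxc, (cons h w).reverse, ?_⟩ hv)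
    intro y hy hyc
    rw [support_reverse, List.mem_reverse, support_cons, List.mem_cons] at hy
    exact hy.resolve_right fun hy => hvw (hw y hy hyc ▸ hy)

theorem isBehind_of_walk (hG : IsCactus G) (hc : c.IsCycle) (hv : c.IsEntryFrom r v)
    {z z' : V} (w : G.Walk z z') (hz : c.IsBehind r v z)
    (hw : ∀ e ∈ w.edges, v ∈ e → e ∉ c.edges) : c.IsBehind r v z' := by
  induction w with
  | nil => exact hz
  | cons h w ih =>
    exact ih (hG.isBehind_of_adj hc hv hz h (hw _ (by simp))) fun e he => hw e (by simp [he])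

theorem dist_lt_of_isBehind (hG : IsCactus G) (hc : c.IsCycle) (hv : c.IsEntryFrom r v)
    {z : V} (hz : c.IsBehind r v z) : G.dist r v < G.dist r z := by
  classical
  obtain ⟨σ, hσ⟩ := hG.1.exists_walk_length_eq_dist r z
  obtain ⟨x, hx, hxc, hxv⟩ := hz σ.reverse
  rw [support_reverse, List.mem_reverse] at hx
  have h₁ := dist_le (σ.takeUntil x hx)
  have h₂ := σ.length_takeUntil_le_length hx
  have h₃ := hG.dist_lt_of_isEntryFrom hc hv hxc hxv
  omega

/-- Part `B` meets `C` but cannot pass the entry `v` of `C`, whose edges on `C` lie in `A`; so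
everything connected to `B` off the edges of `C` lies behind `C`. -/
theorem dist_lt_of_edges_at_entry (hG : IsCactus G) (hB : IsPart G r B) (hAB : Disjoint A B)
    {a : V} {C : G.Walk a a} (hC : C.IsCycle) (hv : C.IsEntryFrom r v)
    (hvA : ∀ e ∈ C.edges, v ∈ e → e ∈ A) (hCB : ∃ e ∈ C.edges, e ∈ B)
    {a' : V} {C' : G.Walk a' a'} (hC'B : ∃ e ∈ C'.edges, e ∈ B)
    (hCC' : C'.edges.Disjoint C.edges) {x : V} (hx : x ∈ C'.support) :
    G.dist r v < G.dist r x := by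
  classical
  have hBv : ∀ e ∈ B, v ∈ e → e ∉ C.edges := fun e heB hve heC =>
    Set.disjoint_left.mp hAB (hvA e heC hve) heB
  obtain ⟨⟨x₁, y₁⟩, heC, heB⟩ := hCB
  obtain ⟨⟨x', y'⟩, he'C', he'B⟩ := hC'B
  have hx₁ : C.IsBehind r v x₁ := fun w => ⟨x₁, w.start_mem_support,
    C.fst_mem_support_of_mem_edges heC, fun h => hBv _ heB (h ▸ Sym2.mem_mk_left _ _) heC⟩
  obtain ⟨w, hw⟩ := hB.connected x₁ x' ⟨_, heB, Sym2.mem_mk_left _ _⟩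
    ⟨_, he'B, Sym2.mem_mk_left _ _⟩
  have hx' := hG.isBehind_of_walk hC hv w hx₁ fun e he => hBv e (hw e he)
  have hx'C' : x' ∈ C'.support := C'.fst_mem_support_of_mem_edges he'C'
  refine hG.dist_lt_of_isBehind hC hv (hG.isBehind_of_walk hC hv
    ((C'.takeUntil x' hx'C').reverse.append (C'.takeUntil x hx)) hx' fun e he _ heC => ?_)
  rw [edges_append, edges_reverse, List.mem_append, List.mem_reverse] at he
  exact hCC' (he.elim (C'.edges_takeUntil_subset_edges _ ·) (C'.edges_takeUntil_subset_edges _ ·))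
    heC

theorem dist_lt_of_isMixed (hG : IsCactus G) (hA : IsPart G r A) (hB : IsPart G r B)
    (hAB : Disjoint A B) {a : V} {C : G.Walk a a} (hC : C.IsCycle) (hCm : IsMixed A B C)
    (hv : C.IsEntryFrom r v) {a' : V} {C' : G.Walk a' a'} (hC'm : IsMixed A B C')
    (hCC' : C'.edges.Disjoint C.edges) {x : V} (hx : x ∈ C'.support) :
    G.dist r v < G.dist r x := by
  have hmin : ∀ w ∈ C.support, G.dist r v ≤ G.dist r w := by
    intro w hw
    rcases eq_or_ne w v with rfl | h
    exacts [le_rfl, (hG.dist_lt_of_isEntryFrom hC hv hw h).le]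
  obtain ⟨e₀, he₀, hve₀⟩ := (mem_support_iff_exists_mem_edges_of_not_nil hC.not_nil).mp hv.1
  rcases hCm.1 e₀ he₀ with h | h
  · exact hG.dist_lt_of_edges_at_entry hB hAB hC hv
      (fun e he hve => hA.topClosed C hC v hv.1 hmin e₀ e he₀ he hve₀ hve h) hCm.2.2 hC'm.2.2
      hCC' hx
  · exact hG.dist_lt_of_edges_at_entry hA hAB.symm hC hv
      (fun e he hve => hB.topClosed C hC v hv.1 hmin e₀ e he₀ he hve₀ hve h) hCm.2.1 hC'm.2.1
      hCC' hx

/-- Otherwise the entry of each cycle would lie strictly farther from `r` than the other's. -/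
theorem edges_eq_of_isMixed (hG : IsCactus G) (hA : IsPart G r A) (hB : IsPart G r B)
    (hAB : Disjoint A B) {a a' : V} {C : G.Walk a a} {C' : G.Walk a' a'} (hC : C.IsCycle)
    (hC' : C'.IsCycle) (hCm : IsMixed A B C) (hC'm : IsMixed A B C') :
    ∀ f, f ∈ C.edges ↔ f ∈ C'.edges := by
  by_contra hne
  have hdisj : C.edges.Disjoint C'.edges := fun e he he' => hne (hG.2 C C' hC hC' e he he')
  obtain ⟨v, hv⟩ := exists_isEntryFrom hG.1 C r
  obtain ⟨v', hv'⟩ := exists_isEntryFrom hG.1 C' r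
  have h₁ := hG.dist_lt_of_isMixed hA hB hAB hC hCm hv hC'm hdisj.symm hv'.1
  have h₂ := hG.dist_lt_of_isMixed hA hB hAB hC' hC'm hv' hCm hdisj hv.1
  omega

theorem ncard_incidentVerts_inter_le_two [Finite V] (hG : IsCactus G) (hA : IsPart G r A)
    (hB : IsPart G r B) (hAB : Disjoint A B) :
    (incidentVerts A ∩ incidentVerts B).ncard ≤ 2 := by
  by_contra! h
  obtain ⟨v₁, v₂, v₃, h₁, h₂, h₃, h₁₂, h₁₃, h₂₃⟩ := (Set.two_lt_ncard_iff).mp h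
  obtain ⟨y, hy, p, q, hp, hq, hD⟩ := exists_isCycle_of_mem_incidentVerts hA hB hAB h₁ h₂ h₁₂
  -- a shared vertex `x ≠ v₁` sees both parts on its own cycle, which has the same edges as `D`
  have key : ∀ x ∈ incidentVerts A ∩ incidentVerts B, ∀ z ∈ incidentVerts A ∩ incidentVerts B,
      x ≠ z → x ≠ v₁ → x = y := by
    intro x hx z hz hxz hxv₁
    obtain ⟨y', hy', p', q', hp', hq', hD'⟩ :=
      exists_isCycle_of_mem_incidentVerts hA hB hAB hx hz hxz
    have hsame := hG.edges_eq_of_isMixed hA hB hAB hD' hD (isMixed_append_reverse hy' hp' hq')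
      (isMixed_append_reverse hy hp hq)
    obtain ⟨e, he, hxe⟩ := p'.exists_mem_edges_start_mem hy'.symm
    obtain ⟨f, hf, hxf⟩ := q'.exists_mem_edges_start_mem hy'.symm
    refine (hD.eq_or_eq_of_mem_both hAB hp hq
      ⟨e, (hsame e).mp (by simp [edges_append, he]), hp' e he, hxe⟩
      ⟨f, (hsame f).mp (by simp [edges_append, hf]), hq' f hf, hxf⟩).resolve_left hxv₁
  exact h₂₃ ((key v₂ h₂ v₃ h₃ h₂₃ h₁₂.symm).trans (key v₃ h₃ v₁ h₁ h₁₃.symm h₁₃.symm).symm)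

/-- Merging two parts that share a vertex loses at most two shared vertices (two parts share at
most two) and one part. -/
theorem ncard_sharedVerts_le [Finite V] (hG : IsCactus G) (r : V) (𝒜 : Finset (Set (Sym2 V)))
    (h𝒜 : ∀ A ∈ 𝒜, IsPart G r A) (hdisj : (𝒜 : Set (Set (Sym2 V))).PairwiseDisjoint id) :
    (sharedVerts 𝒜).ncard ≤ 2 * #𝒜 - 2 := by
  classical
  induction hn : #𝒜 using Nat.strong_induction_on generalizing 𝒜 with
  | _ n ih =>
  obtain h | ⟨x, A, hA, B, hB, hAB, hxA, hxB⟩ := (sharedVerts 𝒜).eq_empty_or_nonempty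
  · simp [h]
  have hB' : B ∈ 𝒜.erase A := mem_erase.2 ⟨hAB.symm, hB⟩
  have hcard : #(insert (A ∪ B) ((𝒜.erase A).erase B)) + 1 ≤ n := by
    have := card_insert_le (A ∪ B) ((𝒜.erase A).erase B)
    have := card_erase_of_mem hB'
    have := card_erase_of_mem hA
    have := card_pos.mpr ⟨B, hB'⟩
    omega
  set 𝒜' := insert (A ∪ B) ((𝒜.erase A).erase B)
  have h𝒜'pos : 0 < #𝒜' := card_pos.mpr (insert_nonempty _ _)
  have h𝒜' : ∀ C ∈ 𝒜', IsPart G r C := by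
    intro C hC
    rcases mem_insert.mp hC with rfl | hC
    · exact (h𝒜 A hA).union (h𝒜 B hB) hxA hxB
    · exact h𝒜 C (mem_of_mem_erase (mem_of_mem_erase hC))
  have hdisj' : (𝒜' : Set (Set (Sym2 V))).PairwiseDisjoint id := by
    rw [coe_insert, Set.pairwiseDisjoint_insert]
    refine ⟨hdisj.subset fun C hC => ?_, fun C hC _ => ?_⟩
    · exact mem_of_mem_erase (mem_of_mem_erase hC)
    · obtain ⟨⟨hC, hCA⟩, hCB⟩ : (C ∈ 𝒜 ∧ C ≠ A) ∧ C ≠ B := by simpa using hC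
      exact Set.disjoint_union_left.mpr ⟨hdisj hA hC hCA.symm, hdisj hB hC hCB.symm⟩
  calc (sharedVerts 𝒜).ncard
      ≤ (sharedVerts 𝒜' ∪ (incidentVerts A ∩ incidentVerts B)).ncard :=
        Set.ncard_le_ncard (sharedVerts_subset_merge hdisj)
    _ ≤ (sharedVerts 𝒜').ncard + 2 := (Set.ncard_union_le _ _).trans
        (Nat.add_le_add_left (hG.ncard_incidentVerts_inter_le_two (h𝒜 A hA) (h𝒜 B hB)
          (hdisj hA hB hAB)) _)
    _ ≤ 2 * #𝒜' - 2 + 2 := Nat.add_le_add_right (ih _ (by omega) 𝒜' h𝒜' hdisj' rfl) _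
    _ ≤ 2 * n - 2 := by omega

end IsCactus

theorem stmt10_general {V : Type*} [Fintype V] (G : SimpleGraph V) (hG : IsCactus G) (r : V)
    (s : ℕ) (P : Fin s → Set (Sym2 V))
    (hdisj : ∀ i j, i ≠ j → Disjoint (P i) (P j))
    (hne : ∀ i, (P i).Nonempty)
    (hconn : ∀ i, ∀ a b : V, (∃ e ∈ P i, a ∈ e) → (∃ e ∈ P i, b ∈ e) →
      ∃ w : G.Walk a b, ∀ e ∈ w.edges, e ∈ P i)
    (htop : ∀ {u : V} (c : G.Walk u u), c.IsCycle →
      ∀ v ∈ c.support, (∀ w ∈ c.support, G.dist r v ≤ G.dist r w) →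
      ∀ e f, e ∈ c.edges → f ∈ c.edges → v ∈ e → v ∈ f →
        ∀ i, e ∈ P i → f ∈ P i) :
    {v : V | ∃ i j, i ≠ j ∧ (∃ e ∈ P i, v ∈ e) ∧ (∃ e ∈ P j, v ∈ e)}.ncard
      ≤ 2 * s - 2 := by
  classical
  set 𝒜 := univ.image P
  have hP : ∀ i j, i ≠ j → P i ≠ P j := fun i j hij hPij =>
    (hne j).ne_empty (disjoint_self.mp (hPij ▸ hdisj i j hij))
  have h𝒜 : ∀ A ∈ 𝒜, IsPart G r A := by
    simp only [𝒜, mem_image, mem_univ, true_and, forall_exists_index, forall_apply_eq_imp_iff]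
    exact fun i => ⟨hconn i, fun c hc v hv hmin e f he hf hve hvf =>
      htop c hc v hv hmin e f he hf hve hvf i⟩
  have hdisj𝒜 : (𝒜 : Set (Set (Sym2 V))).PairwiseDisjoint id := by
    rw [coe_image, coe_univ, Set.image_univ]
    rintro _ ⟨i, rfl⟩ _ ⟨j, rfl⟩ hij
    exact hdisj i j fun h => hij (h ▸ rfl)
  have h𝒜s : #𝒜 ≤ s := card_image_le.trans (by simp)
  calc _ ≤ (sharedVerts 𝒜).ncard := by
        refine Set.ncard_le_ncard ?_
        rintro v ⟨i, j, hij, hi, hj⟩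
        exact ⟨P i, mem_image_of_mem P (mem_univ i), P j, mem_image_of_mem P (mem_univ j),
          hP i j hij, hi, hj⟩
    _ ≤ 2 * #𝒜 - 2 := hG.ncard_sharedVerts_le r 𝒜 h𝒜 hdisj𝒜
    _ ≤ 2 * s - 2 := by omega

/-- If a rooted cactus graph is split into `s` edge-disjoint connected subparts such
that the two topmost edges of every simple cycle lie in the same subpart, then at most
`2s - 2` vertices belong to more than one subpart. -/
theorem stmt10 {V : Type*} [Fintype V] (G : SimpleGraph V) (hG : IsCactus G) (r : V)
    (s : ℕ) (hs : 1 ≤ s) (P : Fin s → Set (Sym2 V))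
    (hcover : ∀ e, e ∈ G.edgeSet ↔ ∃ i, e ∈ P i)
    (hdisj : ∀ i j, i ≠ j → Disjoint (P i) (P j))
    (hne : ∀ i, (P i).Nonempty)
    (hconn : ∀ i, ∀ a b : V, (∃ e ∈ P i, a ∈ e) → (∃ e ∈ P i, b ∈ e) →
      ∃ w : G.Walk a b, ∀ e ∈ w.edges, e ∈ P i)
    (htop : ∀ {u : V} (c : G.Walk u u), c.IsCycle →
      ∀ v ∈ c.support, (∀ w ∈ c.support, G.dist r v ≤ G.dist r w) →
      ∀ e f, e ∈ c.edges → f ∈ c.edges → v ∈ e → v ∈ f →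
        ∀ i, e ∈ P i → f ∈ P i) :
    {v : V | ∃ i j, i ≠ j ∧ (∃ e ∈ P i, v ∈ e) ∧ (∃ e ∈ P j, v ∈ e)}.ncard
      ≤ 2 * s - 2 :=
  stmt10_general G hG r s P hdisj hne hconn htop
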